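/- arXiv:1504.05513 — 4 statements merged into one kernel-verified Lean document; each statement's English description precedes it below -/
import Mathlib

section
/- Let A be a Büchi automaton over an alphabet Σ and w an infinite word, and let M_m denote the counting-monitor state reached after reading the length-m prefix of w. Then for every m : ℕ, M_m is exactly the set of pairs (q, c) for which there exists a finite run ρ of A on the length-m prefix of w with ρ m = q whose number of final visits equals c. -/
/-- A finite run on the length-`m` prefix of `w`: `ρ 0 = q₀` and
`δ (ρ i) (w i) (ρ (i+1))` for all `i < m`. -/
def FinRun {α Q : Type*} (q₀ : Q) (δ : Q → α → Q → Prop) (w : ℕ → α) (m : ℕ)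
    (ρ : Fin (m + 1) → Q) : Prop :=
  ρ 0 = q₀ ∧ ∀ i : Fin m, δ (ρ i.castSucc) (w i.val) (ρ i.succ)

/-- The number of final visits of a finite run. -/
noncomputable def finalVisits {Q : Type*} (F : Set Q) {m : ℕ} (ρ : Fin (m + 1) → Q) : ℕ :=
  {i : Fin (m + 1) | ρ i ∈ F}.ncard

open Classical in
/-- `chi F q` is `1` if `q` is a final state, and `0` otherwise. -/
noncomputable def chi {Q : Type*} (F : Set Q) (q : Q) : ℕ := if q ∈ F then 1 else 0

/-- Post-image of a counting-monitor state upon reading letter `a`. -/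
noncomputable def post {α Q : Type*} (δ : Q → α → Q → Prop) (F : Set Q)
    (M : Set (Q × ℕ)) (a : α) : Set (Q × ℕ) :=
  {p : Q × ℕ | ∃ q c, (q, c) ∈ M ∧ δ q a p.1 ∧ p.2 = c + chi F p.1}

/-- The counting-monitor state reached after reading the length-`m` prefix of `w`. -/
noncomputable def monState {α Q : Type*} (q₀ : Q) (δ : Q → α → Q → Prop) (F : Set Q)
    (w : ℕ → α) : ℕ → Set (Q × ℕ)
  | 0 => {(q₀, chi F q₀)}
  | m + 1 => post δ F (monState q₀ δ F w m) (w m)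

/-! A run on the prefix of length `m + 1` is a run on the prefix of length `m` extended by one
`δ`-step, and appending a state `q` adds `chi F q` to the number of final visits; this is exactly
the update performed by `post`, so the claim follows by induction on `m`. -/

theorem Fin.exists_fin_succ_pi_snoc {n : ℕ} {β : Type*} {P : (Fin (n + 1) → β) → Prop} :
    (∃ x, P x) ↔ ∃ v a, P (Fin.snoc v a) :=
  ⟨fun ⟨x, hx⟩ => ⟨Fin.init x, x (Fin.last n), by rwa [Fin.snoc_init_self]⟩,
    fun ⟨_, _, h⟩ => ⟨_, h⟩⟩

section
variable {α Q : Type*}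

lemma finalVisits_eq_sum (F : Set Q) {m : ℕ} (ρ : Fin (m + 1) → Q) :
    finalVisits F ρ = ∑ i, chi F (ρ i) := by
  classical
  rw [finalVisits, Set.ncard_eq_toFinset_card', Set.toFinset_ofPred, Finset.card_filter]
  rfl

lemma finalVisits_eq_chi_of_fin_one (F : Set Q) (ρ : Fin 1 → Q) :
    finalVisits F ρ = chi F (ρ 0) := by
  simp [finalVisits_eq_sum]

lemma finalVisits_snoc (F : Set Q) {m : ℕ} (ρ : Fin (m + 1) → Q) (q : Q) :
    finalVisits F (Fin.snoc ρ q) = finalVisits F ρ + chi F q := by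
  simp [finalVisits_eq_sum, Fin.sum_univ_castSucc]

lemma finRun_zero_iff {q₀ : Q} {δ : Q → α → Q → Prop} {w : ℕ → α} {ρ : Fin 1 → Q} :
    FinRun q₀ δ w 0 ρ ↔ ρ 0 = q₀ := by
  simp [FinRun]

lemma finRun_snoc_iff {q₀ : Q} {δ : Q → α → Q → Prop} {w : ℕ → α} {m : ℕ}
    {ρ : Fin (m + 1) → Q} {q : Q} :
    FinRun q₀ δ w (m + 1) (Fin.snoc ρ q) ↔ FinRun q₀ δ w m ρ ∧ δ (ρ (Fin.last m)) (w m) q := by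
  rw [FinRun, FinRun, Fin.forall_fin_succ', ← Fin.castSucc_zero, Fin.snoc_castSucc]
  simp only [Fin.succ_castSucc, Fin.snoc_castSucc, Fin.succ_last, Fin.snoc_last, Fin.val_castSucc,
    Fin.val_last, and_assoc]

end

theorem monState_eq_finRun_image_general {α Q : Type*}
    (q₀ : Q) (δ : Q → α → Q → Prop) (F : Set Q) (w : ℕ → α) :
    ∀ m : ℕ, monState q₀ δ F w m =
      {p : Q × ℕ | ∃ ρ : Fin (m + 1) → Q, FinRun q₀ δ w m ρ ∧
        ρ (Fin.last m) = p.1 ∧ finalVisits F ρ = p.2} := by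
  intro m
  induction m with
  | zero =>
    ext ⟨q, c⟩
    simp only [monState, Set.mem_singleton_iff, Prod.mk.injEq, Set.mem_ofPred_eq, finRun_zero_iff,
      finalVisits_eq_chi_of_fin_one, Fin.last_zero]
    constructor
    · rintro ⟨rfl, rfl⟩
      exact ⟨fun _ => q, rfl, rfl, rfl⟩
    · rintro ⟨ρ, h0, rfl, rfl⟩
      exact ⟨h0, by rw [h0]⟩
  | succ m ih =>
    ext ⟨q, c⟩
    rw [monState, post, ih, Set.mem_ofPred_eq, Set.mem_ofPred_eq, Fin.exists_fin_succ_pi_snoc]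
    simp only [finRun_snoc_iff, Fin.snoc_last, finalVisits_snoc, Set.mem_ofPred_eq]
    constructor
    · rintro ⟨_, _, ⟨ρ, hρ, rfl, rfl⟩, hδ, rfl⟩
      exact ⟨ρ, q, ⟨hρ, hδ⟩, rfl, rfl⟩
    · rintro ⟨ρ, _, ⟨hρ, hδ⟩, rfl, rfl⟩
      exact ⟨_, _, ⟨ρ, hρ, rfl, rfl⟩, hδ, rfl⟩

/-- Correctness of the counting monitor: after reading the length-`m` prefix of `w`,
the monitor state is exactly the set of pairs `(q, c)` such that some finite run
of the automaton on that prefix ends in `q` with exactly `c` final visits. -/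
theorem monState_eq_finRun_image {α Q : Type*} [Fintype Q]
    (q₀ : Q) (δ : Q → α → Q → Prop) (F : Set Q) (w : ℕ → α) :
    ∀ m : ℕ, monState q₀ δ F w m =
      {p : Q × ℕ | ∃ ρ : Fin (m + 1) → Q, FinRun q₀ δ w m ρ ∧
        ρ (Fin.last m) = p.1 ∧ finalVisits F ρ = p.2} :=
  monState_eq_finRun_image_general q₀ δ F w
end

section
/- Let A be a Büchi automaton over an alphabet Σ, w an infinite word, k : ℕ, and let M_m denote the counting-monitor state reached after reading the length-m prefix of w. If for every m : ℕ the monitor state M_m contains no pair (q, c) with c ≥ k (i.e., the monitor never reaches the risk condition), then w is not Büchi-accepted by A. -/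
/-- An infinite run of a Büchi automaton (given by initial state `q₀`, transition
relation `δ`) on the infinite word `w`. -/
def InfRun {α Q : Type*} (q₀ : Q) (δ : Q → α → Q → Prop) (w : ℕ → α) (ρ : ℕ → Q) : Prop :=
  ρ 0 = q₀ ∧ ∀ n : ℕ, δ (ρ n) (w n) (ρ (n + 1))

/-- `w` is Büchi-accepted: some infinite run visits the final set `F` infinitely often. -/
def BuchiAccepted {α Q : Type*} (q₀ : Q) (δ : Q → α → Q → Prop) (F : Set Q)
    (w : ℕ → α) : Prop :=
  ∃ ρ : ℕ → Q, InfRun q₀ δ w ρ ∧ {n : ℕ | ρ n ∈ F}.Infinite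

/-- If the counting monitor never reaches the risk condition (no pair `(q, c)` with
`c ≥ k` ever appears in a monitor state), then `w` is not Büchi-accepted. -/
theorem not_buchiAccepted_of_monitor_no_risk {α Q : Type*} [Fintype Q]
    (q₀ : Q) (δ : Q → α → Q → Prop) (F : Set Q) (w : ℕ → α) (k : ℕ)
    (h : ∀ (m : ℕ) (q : Q) (c : ℕ), (q, c) ∈ monState q₀ δ F w m → ¬ k ≤ c) :
    ¬ BuchiAccepted q₀ δ F w := by
  classical
  rintro ⟨ρ, ⟨h0, hstep⟩, hinf⟩
  -- the run's pair is tracked by the monitor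
  have key : ∀ m : ℕ, (ρ m, ∑ n ∈ Finset.range (m + 1), chi F (ρ n)) ∈ monState q₀ δ F w m := by
    intro m
    induction m with
    | zero => simp [monState, h0]
    | succ m ih =>
      refine ⟨ρ m, ∑ n ∈ Finset.range (m + 1), chi F (ρ n), ih, hstep m, ?_⟩
      rw [Finset.sum_range_succ]
  -- the counting sum is unbounded
  obtain ⟨t, hts, htc⟩ := hinf.exists_subset_card_eq k
  have hmax : ∀ n ∈ t, n < t.sup id + 1 := fun n hn =>
    Nat.lt_succ_of_le (Finset.le_sup (f := id) hn)
  set m := t.sup id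
  refine h m (ρ m) _ (key m) ?_
  calc k = t.card := htc.symm
    _ ≤ ((Finset.range (m + 1)).filter (fun n => ρ n ∈ F)).card := by
        apply Finset.card_le_card
        intro n hn
        simp only [Finset.mem_filter, Finset.mem_range]
        exact ⟨hmax n hn, hts hn⟩
    _ = ∑ n ∈ Finset.range (m + 1), chi F (ρ n) := by

        rw [Finset.card_filter]
        simp [chi]
end

section
/- Let S be a type, step : S → S → Prop, and R ⊆ S a set of risk states. Suppose every state of S has at least one step-successor, and suppose s₀ ∉ Attr(R). Then there exists an infinite sequence π : ℕ → S with π 0 = s₀, step (π n) (π (n+1)) for all n, and π n ∉ Attr(R) (hence π n ∉ R) for all n. -/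
/-- The attractor of a set `R` of risk states: the least set containing `R` and
containing every state that has at least one successor and all of whose successors
lie in the attractor. -/
inductive Attr {S : Type*} (step : S → S → Prop) (R : Set S) : S → Prop
  | base {v : S} (hv : v ∈ R) : Attr step R v
  | ind {v : S} (hsucc : ∃ u, step v u) (hall : ∀ u, step v u → Attr step R u) :
      Attr step R v

/-- Safety-game winning strategy: if every state has a successor and `s₀` is outside
the attractor of the risk set `R`, then there is an infinite run from `s₀` staying
outside the attractor (hence outside `R`) forever. -/
theorem exists_infinite_safe_run {S : Type*} (step : S → S → Prop) (R : Set S)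
    (htotal : ∀ s : S, ∃ t, step s t) (s₀ : S) (hs₀ : ¬ Attr step R s₀) :
    ∃ π : ℕ → S, π 0 = s₀ ∧ (∀ n : ℕ, step (π n) (π (n + 1))) ∧
      ∀ n : ℕ, ¬ Attr step R (π n) ∧ π n ∉ R := by
  have key : ∀ s : S, ¬ Attr step R s → ∃ t, step s t ∧ ¬ Attr step R t := by
    intro s hs
    by_contra h
    push_neg at h
    exact hs (Attr.ind (htotal s) (fun u hu => h u hu))
  choose f hf1 hf2 using key
  let π : ℕ → {s // ¬ Attr step R s} := fun n => Nat.rec (⟨s₀, hs₀⟩ : {s // ¬ Attr step R s})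
    (fun _ p => ⟨f p.1 p.2, hf2 p.1 p.2⟩) n
  refine ⟨fun n => (π n).1, rfl, fun n => hf1 _ _, fun n => ⟨(π n).2, fun h => (π n).2 (Attr.base h)⟩⟩
end

section
/- Let X be a finite type, Y a type, φ : X → Y → Prop, n : ℕ, and let x : Fin n → X and y : Fin n → Y be sequences such that for every i, ¬ φ (x i) (y i), and for all i j with j < i, φ (x i) (y j). Then x is injective, and consequently n ≤ Fintype.card X. -/
/-- Termination of the EFSMT counterexample-guided loop: if at every iteration `i`
the candidate `x i` satisfies all previous counterexample constraints `φ (x i) (y j)`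
(`j < i`) but the F-solver refutes it with `¬ φ (x i) (y i)`, then all candidates are
pairwise distinct, so there are at most `Fintype.card X` iterations. -/
theorem efsmt_candidates_injective {X Y : Type*} [Fintype X]
    (φ : X → Y → Prop) (n : ℕ) (x : Fin n → X) (y : Fin n → Y)
    (hce : ∀ i : Fin n, ¬ φ (x i) (y i))
    (hsat : ∀ i j : Fin n, j < i → φ (x i) (y j)) :
    Function.Injective x ∧ n ≤ Fintype.card X := by
  have hinj : Function.Injective x := by
    intro i j hij
    by_contra hne
    rcases lt_or_gt_of_ne hne with h | h
    · exact hce i (hij ▸ hsat j i h)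
    · exact hce j (hij ▸ hsat i j h)
  exact ⟨hinj, by simpa using Fintype.card_le_of_injective x hinj⟩
end
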